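/- For the two-layer bias-free CNTK with global average pooling, K(z,x) = (1/d^2) sum_{i,j} k(zbar_i, xbar_j) where k is the two-layer NTK and zbar_i, xbar_j are cyclic patches of length q, it holds that K(z,x) - K(z,-x) = (2q/d^2)(z · 1_d)(x · 1_d) for all z, x in R^d. -/
import Mathlib


open Matrix

/-- Euclidean norm of a vector. -/
noncomputable def nrm {q : ℕ} (x : Fin q → ℝ) : ℝ := Real.sqrt (x ⬝ᵥ x)

/-- Angle between two vectors. -/
noncomputable def angle {q : ℕ} (z x : Fin q → ℝ) : ℝ :=
  Real.arccos ((z ⬝ᵥ x) / (nrm z * nrm x))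

/-- The NTK of a bias-free two-layer ReLU fully connected network. -/
noncomputable def ntk {q : ℕ} (z x : Fin q → ℝ) : ℝ :=
  (1 / Real.pi) *
    (2 * (z ⬝ᵥ x) * (Real.pi - angle z x) + nrm z * nrm x * Real.sin (angle z x))

/-- The `i`-th cyclic patch of length `q` of a vector `x ∈ ℝ^d`. -/
def patch {d : ℕ} (hd : 0 < d) (q : ℕ) (x : Fin d → ℝ) (i : Fin d) : Fin q → ℝ :=
  fun t => x ⟨((i : ℕ) + (t : ℕ)) % d, Nat.mod_lt _ hd⟩

/-- The two-layer bias-free CNTK with global average pooling: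
`K(z,x) = (1/d²) ∑_{i,j} k(z̄_i, x̄_j)` over cyclic patches of length `q`. -/
noncomputable def cntk {d : ℕ} (hd : 0 < d) (q : ℕ) (z x : Fin d → ℝ) : ℝ :=
  (1 / (d : ℝ) ^ 2) * ∑ i : Fin d, ∑ j : Fin d, ntk (patch hd q z i) (patch hd q x j)

lemma nrm_neg {q : ℕ} (v : Fin q → ℝ) : nrm (-v) = nrm v := by
  unfold nrm; rw [dotProduct_neg, neg_dotProduct, neg_neg]

lemma ntk_sub {q : ℕ} (u v : Fin q → ℝ) : ntk u v - ntk u (-v) = 2 * (u ⬝ᵥ v) := by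
  have hang : angle u (-v) = Real.pi - angle u v := by
    unfold angle
    rw [dotProduct_neg, nrm_neg, neg_div, Real.arccos_neg]
  unfold ntk
  rw [hang, Real.sin_pi_sub, dotProduct_neg, nrm_neg]
  have hπ := Real.pi_ne_zero
  field_simp
  ring

lemma shift_sum {d : ℕ} (hd : 0 < d) (t : ℕ) (z : Fin d → ℝ) :
    ∑ i : Fin d, z ⟨((i : ℕ) + t) % d, Nat.mod_lt _ hd⟩ = ∑ i, z i := by
  haveI : NeZero d := ⟨hd.ne'⟩
  refine Fintype.sum_equiv (Equiv.addRight (⟨t % d, Nat.mod_lt _ hd⟩ : Fin d)) _ _ ?_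
  intro i
  congr 1
  apply Fin.ext
  simp [Fin.add_def, Nat.add_mod_mod]

lemma patch_sum {d : ℕ} (hd : 0 < d) (q : ℕ) (z x : Fin d → ℝ) :
    ∑ i : Fin d, ∑ j : Fin d, (patch hd q z i) ⬝ᵥ (patch hd q x j)
      = (q : ℝ) * (z ⬝ᵥ (fun _ => 1)) * (x ⬝ᵥ (fun _ => 1)) := by
  simp only [patch, dotProduct, mul_one]
  have key : ∀ t : Fin q,
      (∑ i : Fin d, z ⟨((i : ℕ) + (t : ℕ)) % d, Nat.mod_lt _ hd⟩) *
      (∑ j : Fin d, x ⟨((j : ℕ) + (t : ℕ)) % d, Nat.mod_lt _ hd⟩)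
      = (∑ i, z i) * (∑ j, x j) := by
    intro t; rw [shift_sum hd, shift_sum hd]
  calc ∑ i : Fin d, ∑ j : Fin d, ∑ t : Fin q,
        z ⟨((i : ℕ) + (t : ℕ)) % d, Nat.mod_lt _ hd⟩ *
        x ⟨((j : ℕ) + (t : ℕ)) % d, Nat.mod_lt _ hd⟩
      = ∑ t : Fin q, ∑ i : Fin d, ∑ j : Fin d,
        z ⟨((i : ℕ) + (t : ℕ)) % d, Nat.mod_lt _ hd⟩ *
        x ⟨((j : ℕ) + (t : ℕ)) % d, Nat.mod_lt _ hd⟩ := by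
        conv_lhs => enter [2, i]; rw [Finset.sum_comm]
        rw [Finset.sum_comm]
    _ = ∑ t : Fin q, (∑ i : Fin d, z ⟨((i : ℕ) + (t : ℕ)) % d, Nat.mod_lt _ hd⟩) *
        (∑ j : Fin d, x ⟨((j : ℕ) + (t : ℕ)) % d, Nat.mod_lt _ hd⟩) := by
        exact Finset.sum_congr rfl fun t _ => (Finset.sum_mul_sum _ _ _ _).symm
    _ = ∑ _t : Fin q, (∑ i, z i) * (∑ j, x j) := Finset.sum_congr rfl fun t _ => key t
    _ = (q : ℝ) * (∑ i, z i) * (∑ j, x j) := by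
        rw [Finset.sum_const, Finset.card_univ, Fintype.card_fin, nsmul_eq_mul, mul_assoc]

/-- For the two-layer bias-free CNTK-GAP,
`K(z,x) − K(z,−x) = (2q/d²)(z · 1_d)(x · 1_d)`. -/
theorem cntk_diff {d : ℕ} (hd : 0 < d) (q : ℕ) (z x : Fin d → ℝ) :
    cntk hd q z x - cntk hd q z (-x) =
      (2 * (q : ℝ) / (d : ℝ) ^ 2) * (z ⬝ᵥ (fun _ => 1)) * (x ⬝ᵥ (fun _ => 1)) := by
  have hp : ∀ j : Fin d, patch hd q (-x) j = -(patch hd q x j) := by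
    intro j; funext t; simp [patch]
  unfold cntk
  rw [← mul_sub, ← Finset.sum_sub_distrib]
  have : ∀ i ∈ Finset.univ, (∑ j : Fin d, ntk (patch hd q z i) (patch hd q x j)) -
      (∑ j : Fin d, ntk (patch hd q z i) (patch hd q (-x) j)) =
      ∑ j : Fin d, 2 * ((patch hd q z i) ⬝ᵥ (patch hd q x j)) := by
    intro i _
    rw [← Finset.sum_sub_distrib]
    refine Finset.sum_congr rfl fun j _ => ?_
    rw [hp j]; exact ntk_sub _ _
  rw [Finset.sum_congr rfl this]
  simp only [← Finset.mul_sum]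
  rw [patch_sum hd q z x]
  ring
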